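/- Let P be a convex polygon in the plane in which every interior angle is at least 2π/3. For each edge e of P, let T(e) be the closed equilateral triangle erected on e on the outside of P. Then for distinct edges e and e' of P, the triangles T(e) and T(e') have disjoint interiors. -/

import Mathlib

open EuclideanGeometry Set
open scoped InnerProductSpace

set_option maxHeartbeats 1000000

noncomputable section

abbrev E2 := EuclideanSpace ℝ (Fin 2)

lemma collinear_of_perp {ν c : E2} (hν : ν ≠ 0) {s : Set E2}
    (h : ∀ x ∈ s, ⟪ν, x - c⟫_ℝ = 0) : Collinear ℝ s := by
  have hle : vectorSpan ℝ s ≤ (Submodule.span ℝ {ν})ᗮ := by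
    rw [vectorSpan_def, Submodule.span_le]
    rintro d hd
    rw [Set.mem_vsub] at hd
    obtain ⟨x, hx, y, hy, rfl⟩ := hd
    rw [SetLike.mem_coe, Submodule.mem_orthogonal_singleton_iff_inner_right]
    have hxy : (x -ᵥ y : E2) = (x - c) - (y - c) := by
      rw [vsub_eq_sub]; abel
    rw [hxy, inner_sub_right, h x hx, h y hy, sub_zero]
  have h1 : Module.finrank ℝ ((Submodule.span ℝ ({ν} : Set E2))ᗮ) = 1 := by
    have h2 := Submodule.finrank_add_finrank_orthogonal (Submodule.span ℝ ({ν} : Set E2))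
    rw [finrank_span_singleton hν, finrank_euclideanSpace_fin] at h2
    omega
  have hr : Module.rank ℝ ((Submodule.span ℝ ({ν} : Set E2))ᗮ) = 1 := by
    rw [← Module.finrank_eq_rank, h1]; norm_num
  unfold Collinear
  calc Module.rank ℝ (vectorSpan ℝ s) ≤
        Module.rank ℝ ((Submodule.span ℝ ({ν} : Set E2))ᗮ) := Submodule.rank_mono hle
    _ = 1 := hr

lemma not_collinear_of_inner {a b x ν : E2} (hab : a ≠ b)
    (hperp : ⟪ν, b - a⟫_ℝ = 0) (hx : ⟪ν, x - a⟫_ℝ ≠ 0) :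
    ¬ Collinear ℝ ({a, b, x} : Set E2) := by
  intro hcol
  rw [collinear_iff_of_mem (Set.mem_insert a _)] at hcol
  obtain ⟨u, hu⟩ := hcol
  obtain ⟨tb, htb⟩ := hu b (by simp)
  obtain ⟨tx, htx⟩ := hu x (by simp)
  have hb : b - a = tb • u := by rw [htb, vadd_eq_add]; abel
  have hxx : x - a = tx • u := by rw [htx, vadd_eq_add]; abel
  have htb0 : tb ≠ 0 := by
    rintro rfl
    apply hab
    rw [zero_smul] at hb
    have := sub_eq_zero.mp hb
    exact this.symm
  have hu0 : ⟪ν, u⟫_ℝ = 0 := by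
    have : ⟪ν, b - a⟫_ℝ = tb * ⟪ν, u⟫_ℝ := by rw [hb, real_inner_smul_right]
    rw [hperp] at this
    rcases mul_eq_zero.mp this.symm with h | h
    · exact absurd h htb0
    · exact h
  apply hx
  rw [hxx, real_inner_smul_right, hu0, mul_zero]

lemma inner_facts {a b w : E2} (hwa : dist w a = dist a b) (hwb : dist w b = dist a b) :
    ⟪w - midpoint ℝ a b, b - a⟫_ℝ = 0 ∧
    ⟪w - midpoint ℝ a b, w - a⟫_ℝ = 3/4 * (dist a b)^2 := by
  set u := b - a with hu
  set z := w - a with hz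
  have hr : dist a b = ‖u‖ := by rw [dist_eq_norm, hu, norm_sub_rev]
  have h1 : ‖z‖^2 = ‖u‖^2 := by
    rw [← hr, hz, ← dist_eq_norm, hwa]
  have h2 : ‖z - u‖^2 = ‖u‖^2 := by
    have : z - u = w - b := by rw [hz, hu]; abel
    rw [this, ← dist_eq_norm, hwb, hr]
  have hzu : ⟪z, u⟫_ℝ = ‖u‖^2 / 2 := by
    have := norm_sub_sq_real z u
    nlinarith [this]
  have hν : w - midpoint ℝ a b = z - (1/2 : ℝ) • u := by
    rw [midpoint_eq_smul_add, hz, hu, invOf_eq_inv]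
    module
  constructor
  · rw [hν, inner_sub_left, real_inner_smul_left, hzu, real_inner_self_eq_norm_sq]
    ring
  · rw [hν, inner_sub_left, real_inner_smul_left, real_inner_self_eq_norm_sq, hr]
    have hc := real_inner_comm u z
    linarith

lemma midpoint_real (u v₀ : ℝ) : midpoint ℝ u v₀ = (u + v₀)/2 := by
  rw [midpoint_eq_smul_add, invOf_eq_inv, smul_eq_mul]; ring

lemma side_lemma (V : Set E2) {a b w : E2}
    (haV : a ∈ V) (hbV : b ∈ V) (hab : a ≠ b)
    (hwa : dist w a = dist a b) (hwb : dist w b = dist a b)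
    (hout : convexHull ℝ ({a, b, w} : Set E2) ∩ interior (convexHull ℝ V) = ∅) :
    ∀ x ∈ V, ⟪w - midpoint ℝ a b, x - a⟫_ℝ ≤ 0 := by
  obtain ⟨i1, i2⟩ := inner_facts hwa hwb
  set ν := w - midpoint ℝ a b with hνdef
  have hr : (0:ℝ) < dist a b := dist_pos.mpr hab
  have hi2 : 0 < ⟪ν, w - a⟫_ℝ := by rw [i2]; positivity
  intro c hcV
  by_contra hcon
  push_neg at hcon
  have hnc : ¬ Collinear ℝ ({a, b, c} : Set E2) :=
    not_collinear_of_inner hab i1 (ne_of_gt hcon)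
  have hindep : AffineIndependent ℝ ![a, b, c] :=
    affineIndependent_iff_not_collinear_set.mpr hnc
  have hspan : affineSpan ℝ (Set.range ![a, b, c]) = ⊤ := by
    rw [hindep.affineSpan_eq_top_iff_card_eq_finrank_add_one]
    simp [finrank_euclideanSpace_fin]
  let B : AffineBasis (Fin 3) ℝ E2 := ⟨![a, b, c], hindep, hspan⟩
  have hB0 : B 0 = a := rfl
  have hB1 : B 1 = b := rfl
  have hB2 : B 2 = c := rfl
  set x := B.coord 0 w with hxdef
  set y := B.coord 1 w with hydef
  set z := B.coord 2 w with hzdef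
  have hsum : x + y + z = 1 := by
    have h := B.sum_coord_apply_eq_one w
    rwa [Fin.sum_univ_three] at h
  have hcomb : w = x • a + y • b + z • c := by
    have h := B.affineCombination_coord_eq_self w
    rw [Finset.affineCombination_eq_linear_combination _ _ _
      (by rw [Fin.sum_univ_three]; exact hsum)] at h
    rw [Fin.sum_univ_three] at h
    rw [← h, hB0, hB1, hB2]
  have hwa' : w - a = y • (b - a) + z • (c - a) := by
    have hx1 : x = 1 - y - z := by linarith
    rw [hcomb, hx1]; module
  have hz : 0 < z := by
    have h := hi2
    rw [hwa', inner_add_right, real_inner_smul_right, real_inner_smul_right, i1] at h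
    nlinarith [hcon]
  set δ : ℝ := 1 / (4 * (1 + |x| + |y|)) with hδdef
  have hden : (0:ℝ) < 1 + |x| + |y| := by positivity
  have hδ0 : 0 < δ := by positivity
  have hkey : δ + δ * |x| + δ * |y| = 1/4 := by
    rw [hδdef]; field_simp
  have hax : 0 ≤ δ * |x| := mul_nonneg hδ0.le (abs_nonneg x)
  have hay : 0 ≤ δ * |y| := mul_nonneg hδ0.le (abs_nonneg y)
  have hδhalf : δ ≤ 1/4 := by linarith
  have hδx : δ * |x| < 1/4 := by linarith
  have hδy : δ * |y| < 1/4 := by linarith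
  set pδ : E2 := (1 - δ) • (midpoint ℝ a b) + δ • w with hpδ
  have hpmemT : pδ ∈ convexHull ℝ ({a, b, w} : Set E2) := by
    have hm : midpoint ℝ a b ∈ convexHull ℝ ({a, b, w} : Set E2) :=
      segment_subset_convexHull (by simp) (by simp) (midpoint_mem_segment a b)
    have hwmem : w ∈ convexHull ℝ ({a, b, w} : Set E2) := subset_convexHull ℝ _ (by simp)
    exact (convex_convexHull ℝ _) hm hwmem (by linarith) hδ0.le (by ring)
  have hrange : Set.range (B : Fin 3 → E2) = ({a, b, c} : Set E2) := by
    show Set.range ![a, b, c] = _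
    rw [Matrix.range_cons, Matrix.range_cons, Matrix.range_cons, Matrix.range_empty]
    ext t
    simp
    tauto
  have hlin : pδ = AffineMap.lineMap (midpoint ℝ a b) w δ := by
    rw [AffineMap.lineMap_apply_module]
  have hcoord : ∀ k : Fin 3,
      B.coord k pδ = (1 - δ) * B.coord k (midpoint ℝ a b) + δ * B.coord k w := by
    intro k
    rw [hlin, AffineMap.apply_lineMap, AffineMap.lineMap_apply_module, smul_eq_mul, smul_eq_mul]
  have hcm : ∀ k : Fin 3,
      B.coord k (midpoint ℝ a b) = (B.coord k a + B.coord k b)/2 := by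
    intro k
    rw [AffineMap.map_midpoint, midpoint_real]
  have hc0 : B.coord 0 pδ = (1 - δ) * (1/2) + δ * x := by
    rw [hcoord 0, hcm 0, ← hB0, ← hB1, B.coord_apply, B.coord_apply]
    norm_num
    exact Or.inl rfl
  have hc1 : B.coord 1 pδ = (1 - δ) * (1/2) + δ * y := by
    rw [hcoord 1, hcm 1, ← hB0, ← hB1, B.coord_apply, B.coord_apply]
    norm_num
    exact Or.inl rfl
  have hc2 : B.coord 2 pδ = δ * z := by
    rw [hcoord 2, hcm 2, ← hB0, ← hB1, B.coord_apply, B.coord_apply]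
    norm_num [Fin.ext_iff]
    exact Or.inl rfl
  have hpint : pδ ∈ interior (convexHull ℝ ({a, b, c} : Set E2)) := by
    rw [← hrange, B.interior_convexHull]
    have g0 : 0 < B.coord 0 pδ := by
      rw [hc0]; nlinarith [neg_abs_le x, hδx, hδhalf, hδ0]
    have g1 : 0 < B.coord 1 pδ := by
      rw [hc1]; nlinarith [neg_abs_le y, hδy, hδhalf, hδ0]
    have g2 : 0 < B.coord 2 pδ := by
      rw [hc2]; positivity
    intro k
    fin_cases k
    · exact g0
    · exact g1
    · exact g2
  have habc : ({a, b, c} : Set E2) ⊆ V := by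
    rintro t (rfl | rfl | rfl) <;> assumption
  have : pδ ∈ convexHull ℝ ({a, b, w} : Set E2) ∩ interior (convexHull ℝ V) :=
    ⟨hpmemT, interior_mono (convexHull_mono habc) hpint⟩
  rw [hout] at this
  exact this

lemma proj_lemma (V : Set E2) {a b w p : E2}
    (haV : a ∈ V) (hbV : b ∈ V) (hab : a ≠ b)
    (hwa : dist w a = dist a b) (hwb : dist w b = dist a b)
    (hout : convexHull ℝ ({a, b, w} : Set E2) ∩ interior (convexHull ℝ V) = ∅)
    (hp : p ∈ interior (convexHull ℝ ({a, b, w} : Set E2))) :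
    ∃ q ∈ openSegment ℝ a b, ∀ x ∈ convexHull ℝ V, ⟪p - q, x - q⟫_ℝ ≤ 0 := by
  obtain ⟨i1, i2⟩ := inner_facts hwa hwb
  set ν := w - midpoint ℝ a b with hνdef
  have hr : (0:ℝ) < dist a b := dist_pos.mpr hab
  have hi2 : 0 < ⟪ν, w - a⟫_ℝ := by rw [i2]; positivity
  have hside := side_lemma V haV hbV hab hwa hwb hout
  have hnc : ¬ Collinear ℝ ({a, b, w} : Set E2) :=
    not_collinear_of_inner hab i1 (ne_of_gt hi2)
  have hindep : AffineIndependent ℝ ![a, b, w] :=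
    affineIndependent_iff_not_collinear_set.mpr hnc
  have hspan : affineSpan ℝ (Set.range ![a, b, w]) = ⊤ := by
    rw [hindep.affineSpan_eq_top_iff_card_eq_finrank_add_one]
    simp [finrank_euclideanSpace_fin]
  let B : AffineBasis (Fin 3) ℝ E2 := ⟨![a, b, w], hindep, hspan⟩
  have hB0 : B 0 = a := rfl
  have hB1 : B 1 = b := rfl
  have hB2 : B 2 = w := rfl
  have hrange : Set.range (B : Fin 3 → E2) = ({a, b, w} : Set E2) := by
    show Set.range ![a, b, w] = _
    rw [Matrix.range_cons, Matrix.range_cons, Matrix.range_cons, Matrix.range_empty]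
    ext t; simp; tauto
  set α := B.coord 0 p with hαdef
  set β := B.coord 1 p with hβdef
  set γ := B.coord 2 p with hγdef
  rw [← hrange, B.interior_convexHull] at hp
  have hα : 0 < α := hp 0
  have hβ : 0 < β := hp 1
  have hγ : 0 < γ := hp 2
  have hsum : α + β + γ = 1 := by
    have h := B.sum_coord_apply_eq_one p
    rwa [Fin.sum_univ_three] at h
  have hcomb : p = α • a + β • b + γ • w := by
    have h := B.affineCombination_coord_eq_self p
    rw [Finset.affineCombination_eq_linear_combination _ _ _
      (by rw [Fin.sum_univ_three]; exact hsum)] at h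
    rw [Fin.sum_univ_three] at h
    rw [← h, hB0, hB1, hB2]
  set s : ℝ := β + γ/2 with hsdef
  have hs0 : 0 < s := by positivity
  have hs1 : s < 1 := by rw [hsdef]; linarith
  set q : E2 := a + s • (b - a) with hqdef
  have hqseg : q ∈ openSegment ℝ a b := by
    refine ⟨1 - s, s, by linarith, hs0, by ring, by module⟩
  refine ⟨q, hqseg, ?_⟩
  have hpq : p - q = γ • ν := by
    have hα1 : α = 1 - β - γ := by linarith
    rw [hcomb, hνdef, midpoint_eq_smul_add, invOf_eq_inv, hqdef, hα1, hsdef]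
    module
  intro x hx
  have hhalf : ∀ t ∈ convexHull ℝ V, ⟪ν, t⟫_ℝ ≤ ⟪ν, a⟫_ℝ := by
    intro t ht
    have hlin : IsLinearMap ℝ (fun t : E2 => ⟪ν, t⟫_ℝ) := by
      constructor
      · intro u v'; exact inner_add_right ν u v'
      · intro c u; rw [smul_eq_mul]; exact real_inner_smul_right ν u c
    have hcvx : Convex ℝ {t : E2 | ⟪ν, t⟫_ℝ ≤ ⟪ν, a⟫_ℝ} := convex_halfSpace_le hlin _
    refine convexHull_min ?_ hcvx ht
    intro u hu
    have h := hside u hu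
    rw [inner_sub_right] at h
    simp only [Set.mem_setOf_eq]
    linarith
  have hxq : x - q = (x - a) - s • (b - a) := by rw [hqdef]; abel
  have : ⟪ν, x - q⟫_ℝ ≤ 0 := by
    rw [hxq, inner_sub_right, inner_sub_right, real_inner_smul_right, i1]
    have := hhalf x hx
    linarith
  rw [hpq, real_inner_smul_left]
  exact mul_nonpos_of_nonneg_of_nonpos hγ.le this

/-- For a convex polygon with vertices `v 0, …, v (n-1)` in cyclic order, all interior
angles at least `2π/3`, and `w i` the apex of the equilateral triangle erected on the
outside of the polygon over edge `v i v (i+1)`, the exterior equilateral triangles on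
distinct edges have disjoint interiors. -/
theorem exterior_triangles_disjoint (n : ℕ) [NeZero n] (hn : 3 ≤ n)
    (v : Fin n → EuclideanSpace ℝ (Fin 2))
    (hpos : ∀ i : Fin n, v i ∉ convexHull ℝ (v '' {j | j ≠ i}))
    (hangle : ∀ i : Fin n, 2 * Real.pi / 3 ≤ ∠ (v (i - 1)) (v i) (v (i + 1)))
    (w : Fin n → EuclideanSpace ℝ (Fin 2))
    (hw1 : ∀ i : Fin n, dist (w i) (v i) = dist (v i) (v (i + 1)))
    (hw2 : ∀ i : Fin n, dist (w i) (v (i + 1)) = dist (v i) (v (i + 1)))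
    (hout : ∀ i : Fin n,
      convexHull ℝ {v i, v (i + 1), w i} ∩ interior (convexHull ℝ (Set.range v)) = ∅) :
    ∀ i j : Fin n, i ≠ j →
      interior (convexHull ℝ {v i, v (i + 1), w i}) ∩
        interior (convexHull ℝ {v j, v (j + 1), w j}) = ∅ := by
  -- index arithmetic
  have hone : (1 : Fin n) ≠ 0 := by
    intro h
    have h' := congrArg Fin.val h
    have h0 : (0 : Fin n).val = 0 := rfl
    have e1 : 1 % n = 1 := Nat.mod_eq_of_lt (by omega)
    rw [Fin.val_one', h0, e1] at h'
    omega
  have htwo : (1 + 1 : Fin n) ≠ 0 := by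
    intro h
    have h' := congrArg Fin.val h
    have h0 : (0 : Fin n).val = 0 := rfl
    have e1 : 1 % n = 1 := Nat.mod_eq_of_lt (by omega)
    rw [Fin.val_add, Fin.val_one', h0, e1] at h'
    have e2 : (1 + 1) % n = 2 := Nat.mod_eq_of_lt (by omega)
    rw [e2] at h'
    omega
  have hsucc : ∀ i : Fin n, i + 1 ≠ i := by
    intro i h
    exact hone (add_eq_left.mp h)
  have hsucc2 : ∀ i : Fin n, i + 1 + 1 ≠ i := by
    intro i h
    rw [add_assoc] at h
    exact htwo (add_eq_left.mp h)
  -- injectivity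
  have hinj : Function.Injective v := by
    intro i j hij
    by_contra hne
    exact hpos i (subset_convexHull ℝ _ ⟨j, Ne.symm hne, hij.symm⟩)
  -- no three distinct vertices are collinear
  have mid : ∀ ka km kb : Fin n, km ≠ ka → km ≠ kb →
      Wbtw ℝ (v ka) (v km) (v kb) → False := by
    intro ka km kb hma hmb hw'
    apply hpos km
    have hsub : segment ℝ (v ka) (v kb) ⊆ convexHull ℝ (v '' {j | j ≠ km}) :=
      segment_subset_convexHull ⟨ka, fun h => hma h.symm, rfl⟩ ⟨kb, fun h => hmb h.symm, rfl⟩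
    exact hsub hw'.mem_segment
  have no3 : ∀ k1 k2 k3 : Fin n, k1 ≠ k2 → k1 ≠ k3 → k2 ≠ k3 →
      ¬ Collinear ℝ ({v k1, v k2, v k3} : Set E2) := by
    intro k1 k2 k3 h12 h13 h23 hcol
    rcases hcol.wbtw_or_wbtw_or_wbtw with h | h | h
    · exact mid k1 k2 k3 h12.symm h23 h
    · exact mid k2 k3 k1 h23.symm h13.symm h
    · exact mid k3 k1 k2 h13 h12 h
  intro i j hij
  rw [Set.eq_empty_iff_forall_notMem]
  rintro p ⟨hpi, hpj⟩
  have hii1 : v i ≠ v (i + 1) := fun h => hsucc i ((hinj h).symm)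
  have hjj1 : v j ≠ v (j + 1) := fun h => hsucc j ((hinj h).symm)
  obtain ⟨qi, hqi, hvi⟩ := proj_lemma (Set.range v) (mem_range_self i) (mem_range_self (i+1))
    hii1 (hw1 i) (hw2 i) (hout i) hpi
  obtain ⟨qj, hqj, hvj⟩ := proj_lemma (Set.range v) (mem_range_self j) (mem_range_self (j+1))
    hjj1 (hw1 j) (hw2 j) (hout j) hpj
  have hqiK : qi ∈ convexHull ℝ (Set.range v) :=
    segment_subset_convexHull (mem_range_self i) (mem_range_self (i+1)) (openSegment_subset_segment ℝ _ _ hqi)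
  have hqjK : qj ∈ convexHull ℝ (Set.range v) :=
    segment_subset_convexHull (mem_range_self j) (mem_range_self (j+1)) (openSegment_subset_segment ℝ _ _ hqj)
  have h1 := hvi qj hqjK
  have h2 := hvj qi hqiK
  have hqq : qj = qi := by
    have e : qj - qi = (p - qi) - (p - qj) := by abel
    have key : ⟪qj - qi, qj - qi⟫_ℝ ≤ 0 := by
      have e2 : ⟪qj - qi, qj - qi⟫_ℝ
          = ⟪p - qi, qj - qi⟫_ℝ - ⟪p - qj, qj - qi⟫_ℝ := by
        rw [e, inner_sub_left]
      have e3 : ⟪p - qj, qj - qi⟫_ℝ = - ⟪p - qj, qi - qj⟫_ℝ := by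
        rw [show qi - qj = -(qj - qi) from by abel, inner_neg_right]; ring
      rw [e2, e3]
      linarith
    exact sub_eq_zero.mp (real_inner_self_nonpos.mp key)
  subst hqq
  -- now qj lies in both open segments
  set νj : E2 := w j - midpoint ℝ (v j) (v (j + 1)) with hνj
  obtain ⟨i1j, i2j⟩ := inner_facts (hw1 j) (hw2 j)
  have hrj : (0:ℝ) < dist (v j) (v (j+1)) := dist_pos.mpr hjj1
  have hν0 : νj ≠ 0 := by
    intro h
    rw [← hνj] at i2j
    rw [h, inner_zero_left] at i2j
    nlinarith
  have hsidej := side_lemma (Set.range v) (mem_range_self j) (mem_range_self (j+1))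
    hjj1 (hw1 j) (hw2 j) (hout j)
  -- q - v j is orthogonal to νj
  obtain ⟨t1, t2, ht1, ht2, hts, hteq⟩ := hqj
  have hfq : ⟪νj, qj - v j⟫_ℝ = 0 := by
    have e : qj - v j = t2 • (v (j+1) - v j) := by
      have ht1' : t1 = 1 - t2 := by linarith
      rw [← hteq, ht1']; module
    rw [e, real_inner_smul_right, ← hνj] at *
    rw [i1j]
    ring
  obtain ⟨s1, s2, hs1, hs2, hss, hseq⟩ := hqi
  have hfq2 : s1 * ⟪νj, v i - v j⟫_ℝ + s2 * ⟪νj, v (i+1) - v j⟫_ℝ = 0 := by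
    have e : qj - v j = s1 • (v i - v j) + s2 • (v (i+1) - v j) := by
      have hs1' : s1 = 1 - s2 := by linarith
      rw [← hseq, hs1']; module
    rw [e, inner_add_right, real_inner_smul_right, real_inner_smul_right] at hfq
    exact hfq
  have hA : ⟪νj, v i - v j⟫_ℝ ≤ 0 := hsidej (v i) ⟨i, rfl⟩
  have hB : ⟪νj, v (i+1) - v j⟫_ℝ ≤ 0 := hsidej (v (i+1)) ⟨i+1, rfl⟩
  have hA0 : ⟪νj, v i - v j⟫_ℝ = 0 := by
    have u1 : s1 * ⟪νj, v i - v j⟫_ℝ ≤ 0 := mul_nonpos_of_nonneg_of_nonpos hs1.le hA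
    have u2 : s2 * ⟪νj, v (i+1) - v j⟫_ℝ ≤ 0 := mul_nonpos_of_nonneg_of_nonpos hs2.le hB
    have : s1 * ⟪νj, v i - v j⟫_ℝ = 0 := by linarith
    rcases mul_eq_zero.mp this with h | h
    · exact absurd h (ne_of_gt hs1)
    · exact h
  have hB0 : ⟪νj, v (i+1) - v j⟫_ℝ = 0 := by
    have u1 : s1 * ⟪νj, v i - v j⟫_ℝ ≤ 0 := mul_nonpos_of_nonneg_of_nonpos hs1.le hA
    have u2 : s2 * ⟪νj, v (i+1) - v j⟫_ℝ ≤ 0 := mul_nonpos_of_nonneg_of_nonpos hs2.le hB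
    have : s2 * ⟪νj, v (i+1) - v j⟫_ℝ = 0 := by linarith
    rcases mul_eq_zero.mp this with h | h
    · exact absurd h (ne_of_gt hs2)
    · exact h
  have hperp : ∀ x ∈ ({v i, v (i+1), v j, v (j+1)} : Set E2), ⟪νj, x - v j⟫_ℝ = 0 := by
    rintro x (rfl | rfl | rfl | rfl)
    · exact hA0
    · exact hB0
    · simp
    · rw [← hνj] at i1j; exact i1j
  have hcol4 : Collinear ℝ ({v i, v (i+1), v j, v (j+1)} : Set E2) :=
    collinear_of_perp hν0 hperp
  by_cases hji1 : j = i + 1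
  · subst hji1
    refine no3 i (i+1) (i+1+1) (hsucc i).symm (hsucc2 i).symm (hsucc (i+1)).symm ?_
    refine hcol4.subset ?_
    intro x hx
    simp only [Set.mem_insert_iff, Set.mem_singleton_iff] at hx ⊢
    tauto
  · by_cases hij1 : i = j + 1
    · subst hij1
      refine no3 j (j+1) (j+1+1) (hsucc j).symm (hsucc2 j).symm (hsucc (j+1)).symm ?_
      refine hcol4.subset ?_
      intro x hx
      simp only [Set.mem_insert_iff, Set.mem_singleton_iff] at hx ⊢
      tauto
    · refine no3 i (i+1) j (hsucc i).symm hij (fun h => hji1 h.symm) ?_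
      refine hcol4.subset ?_
      intro x hx
      simp only [Set.mem_insert_iff, Set.mem_singleton_iff] at hx ⊢
      tauto

end
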